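/- arXiv:1709.04471 — 2 statements merged into one kernel-verified Lean document; each statement's English description precedes it below -/
import Mathlib

section
/- Let E(ρ) = Σ_i p_i E_i ρ E_i† with isometries E_i satisfying E_i† E_j = δ_{ij} I and Σ_i p_i = 1, p_i ≥ 0. Define the inverse map E⁻¹(σ) = Σ_i E_i† σ E_i + Π_⊥ σ Π_⊥ where Π_⊥ = I − Σ_i E_i E_i†. Then for any operator A on H_out and any state ρ on H_in, E⁻¹(A · E(ρ)) = E†(A) · ρ, where E†(A) = Σ_i p_i E_i† A E_i. -/
/-! For a channel E(ρ) = Σ p_i E_i ρ E_i† built from mutually orthogonal isometries,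
the inverse map E⁻¹(σ) = Σ_i E_i† σ E_i + Π⊥ σ Π⊥ satisfies
E⁻¹(A · E(ρ)) = E†(A) · ρ, where E†(A) = Σ_i p_i E_i† A E_i. -/

open Matrix
open scoped ComplexOrder

noncomputable section

def IsDensity {ι : Type} [Fintype ι] [DecidableEq ι] (ρ : Matrix ι ι ℂ) : Prop :=
  ρ.PosSemidef ∧ ρ.trace = 1

theorem inverse_channel_pulls_through {m n k : ℕ}
    (E : Fin k → Matrix (Fin n) (Fin m) ℂ) (p : Fin k → ℝ)
    (hE : ∀ i j, (E i)ᴴ * E j = if i = j then (1 : Matrix (Fin m) (Fin m) ℂ) else 0)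
    (hp : ∀ i, 0 ≤ p i) (hps : ∑ i, p i = 1)
    (A : Matrix (Fin n) (Fin n) ℂ)
    (ρ : Matrix (Fin m) (Fin m) ℂ) (hρ : IsDensity ρ)
    (σ : Matrix (Fin n) (Fin n) ℂ) (hσ : σ = ∑ j, (p j : ℂ) • (E j * ρ * (E j)ᴴ))
    (Pperp : Matrix (Fin n) (Fin n) ℂ) (hP : Pperp = 1 - ∑ i, E i * (E i)ᴴ) :
    (∑ i, (E i)ᴴ * (A * σ) * E i) = (∑ i, (p i : ℂ) • ((E i)ᴴ * A * E i)) * ρ ∧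
      Pperp * (A * σ) * Pperp = 0 := by
  constructor
  · rw [Finset.sum_mul]
    refine Finset.sum_congr rfl fun i _ => ?_
    rw [hσ, Finset.mul_sum, Matrix.mul_sum, Matrix.sum_mul]
    rw [Finset.sum_eq_single i]
    · have h1 := hE i i
      rw [if_pos rfl] at h1
      simp only [Matrix.mul_smul, Matrix.smul_mul]
      congr 1
      calc (E i)ᴴ * (A * (E i * ρ * (E i)ᴴ)) * E i
          = (E i)ᴴ * A * E i * ρ * ((E i)ᴴ * E i) := by
            simp only [Matrix.mul_assoc]
        _ = (E i)ᴴ * A * E i * ρ := by rw [h1, Matrix.mul_one]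
    · intro j _ hj
      have h0 := hE j i
      rw [if_neg hj] at h0
      simp only [Matrix.mul_smul, Matrix.smul_mul]
      have hz : (E i)ᴴ * (A * (E j * ρ * (E j)ᴴ)) * E i = 0 := by
        calc (E i)ᴴ * (A * (E j * ρ * (E j)ᴴ)) * E i
            = (E i)ᴴ * A * E j * ρ * ((E j)ᴴ * E i) := by simp only [Matrix.mul_assoc]
          _ = 0 := by rw [h0, Matrix.mul_zero]
      rw [hz, smul_zero]
    · intro h; exact absurd (Finset.mem_univ i) h
  · have hσP : σ * Pperp = 0 := by
      rw [hσ, Finset.sum_mul]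
      refine Finset.sum_eq_zero fun j _ => ?_
      have hEP : (E j)ᴴ * Pperp = 0 := by
        rw [hP, Matrix.mul_sub, Matrix.mul_one, Matrix.mul_sum]
        have hs : ∑ i, (E j)ᴴ * (E i * (E i)ᴴ) = (E j)ᴴ := by
          rw [Finset.sum_eq_single j]
          · rw [← Matrix.mul_assoc, hE j j, if_pos rfl, Matrix.one_mul]
          · intro i _ hi
            rw [← Matrix.mul_assoc, hE j i, if_neg (Ne.symm hi), Matrix.zero_mul]
          · intro h; exact absurd (Finset.mem_univ j) h
        rw [hs, sub_self]
      rw [Matrix.smul_mul, Matrix.mul_assoc, hEP, Matrix.mul_zero, smul_zero]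
    calc Pperp * (A * σ) * Pperp = Pperp * A * (σ * Pperp) := by
          simp only [Matrix.mul_assoc]
      _ = 0 := by rw [hσP, Matrix.mul_zero]

end
end

section
/- The map (x,y) ↦ (−3y, 2(y+x)) from ℤ² to ℤ² is injective, and there is a composition of the bijective/partial maps (3a,2b)↦(a,b), (a,b)↦(a,2a+b), (a,b)↦(−(a+b),b) carrying (−3(y+x), 2(y+2x)) to (x,−y); consequently the U(1)-covariant code corrects erasure of the second mode. -/
/-! Correctability of the U(1)-covariant code V|x⟩ = Σ_y |−3y, −x+y, 2(y+x)⟩ under loss of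
the second mode: the map (x, y) ↦ (−3y, 2(y+x)) of labels on modes 1 and 3 is injective,
and (after the change of variable y → y + x giving labels (−3(y+x), 2(y+2x))) there is a
decoding map g : ℤ² → ℤ², assembled from the steps (3a,2b) ↦ (a,b), (a,b) ↦ (a,2a+b),
(a,b) ↦ (−(a+b),b), with g(−3(y+x), 2(y+2x)) = (x, −y); hence the code corrects erasure of
mode 2. -/

theorem mode2_erasure_decodable :
    Function.Injective (fun p : ℤ × ℤ => ((-3 * p.2, 2 * (p.2 + p.1)) : ℤ × ℤ)) ∧
    ∃ g : ℤ × ℤ → ℤ × ℤ, ∀ x y : ℤ, g (-3 * (y + x), 2 * (y + 2 * x)) = (x, -y) := by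
  constructor
  · intro p q h
    simp only [Prod.mk.injEq] at h
    have h1 : p.2 = q.2 := by omega
    have h2 : p.1 = q.1 := by omega
    exact Prod.ext h2 h1
  · refine ⟨fun p => (p.2 / 2 + p.1 / 3, p.1 / 3 + (p.2 / 2 + p.1 / 3)), fun x y => ?_⟩
    simp only [Prod.mk.injEq]
    rw [show ((-3:ℤ) * (y + x)) = 3 * (-(y + x)) by ring,
      Int.mul_ediv_cancel_left _ (by norm_num : (3:ℤ) ≠ 0),
      Int.mul_ediv_cancel_left _ (by norm_num : (2:ℤ) ≠ 0)]
    omega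
end
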